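/- arXiv:1910.07327 — 2 statements merged into one kernel-verified Lean document; each statement's English description precedes it below -/
import Mathlib

section
/- Let A = v₁∧⋯∧v_p be a nonzero p-blade in a finite-dimensional real inner product space X and let W ≤ X be a subspace. Then ‖A ∧ B‖ = ‖P_{W^⊥}(A)‖·‖B‖ for any blade B with [B] = W, where P_{W^⊥} is the orthogonal projection onto W^⊥ extended to the exterior algebra. -/
open scoped RealInnerProductSpace

/-- The blade (wedge product) of a finite family of vectors in the exterior
algebra. -/
noncomputable def blade {X : Type*} [NormedAddCommGroup X] [InnerProductSpace ℝ X]
    {p : ℕ} (v : Fin p → X) : ExteriorAlgebra ℝ X :=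
  (List.ofFn fun i => ExteriorAlgebra.ι ℝ (v i)).prod

section Aux
variable {X : Type*} [NormedAddCommGroup X] [InnerProductSpace ℝ X]

lemma blade_cons {q : ℕ} (x : X) (w : Fin q → X) :
    blade (Fin.cons x w) = ExteriorAlgebra.ι ℝ x * blade w := by
  simp [blade, List.ofFn_succ]

lemma blade_snoc {p : ℕ} (v : Fin (p + 1) → X) :
    blade v = blade (fun i => v i.castSucc) * ExteriorAlgebra.ι ℝ (v (Fin.last p)) := by
  rw [blade, List.ofFn_succ' (fun i => ExteriorAlgebra.ι ℝ (v i)), List.concat_eq_append,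
    List.prod_append, List.prod_cons, List.prod_nil, mul_one]
  rfl

lemma ι_mul_blade_eq_zero {q : ℕ} (w : Fin q → X) {x : X}
    (hx : x ∈ Submodule.span ℝ (Set.range w)) :
    ExteriorAlgebra.ι ℝ x * blade w = 0 := by
  have : Submodule.span ℝ (Set.range w) ≤
      LinearMap.ker ((LinearMap.mulRight ℝ (blade w)).comp (ExteriorAlgebra.ι ℝ)) := by
    rw [Submodule.span_le]
    rintro _ ⟨i, rfl⟩
    simpa [blade] using ExteriorAlgebra.ι_mul_prod_list w i
  simpa using this hx

lemma blade_mul_blade_congr : ∀ {p q : ℕ} (w : Fin q → X) (v u : Fin p → X),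
    (∀ i, v i - u i ∈ Submodule.span ℝ (Set.range w)) →
    blade v * blade w = blade u * blade w := by
  intro p
  induction p with
  | zero => intro q w v u _; rw [Subsingleton.elim v u]
  | succ p ih =>
    intro q w v u h
    have hlast : ExteriorAlgebra.ι ℝ (v (Fin.last p)) * blade w
        = ExteriorAlgebra.ι ℝ (u (Fin.last p)) * blade w := by
      have := ι_mul_blade_eq_zero w (h (Fin.last p))
      rw [map_sub, sub_mul, sub_eq_zero] at this
      exact this
    have hsub : Submodule.span ℝ (Set.range w) ≤
        Submodule.span ℝ (Set.range (Fin.cons (u (Fin.last p)) w)) := by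
      rw [Submodule.span_le]
      rintro _ ⟨i, rfl⟩
      exact Submodule.subset_span ⟨i.succ, by simp⟩
    calc blade v * blade w
        = blade (fun i => v i.castSucc) * (ExteriorAlgebra.ι ℝ (v (Fin.last p)) * blade w) := by
          rw [blade_snoc v, mul_assoc]
      _ = blade (fun i => v i.castSucc) * blade (Fin.cons (u (Fin.last p)) w) := by
          rw [hlast, ← blade_cons]
      _ = blade (fun i => u i.castSucc) * blade (Fin.cons (u (Fin.last p)) w) :=
          ih _ _ _ fun i => hsub (h i.castSucc)
      _ = blade u * blade w := by
          rw [blade_cons, ← mul_assoc, ← blade_snoc]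

lemma blade_mul_blade {p q : ℕ} (v : Fin p → X) (w : Fin q → X) :
    blade v * blade w = blade (Fin.append v w) := by
  simp only [blade]
  rw [← List.prod_append, ← List.ofFn_fin_append]
  have : (fun i => ExteriorAlgebra.ι ℝ (Fin.append v w i))
      = Fin.append (fun i => ExteriorAlgebra.ι ℝ (v i)) (fun i => ExteriorAlgebra.ι ℝ (w i)) :=
    funext fun i => Fin.addCases
      (fun i => by simp [Fin.append_left]) (fun i => by simp [Fin.append_right]) i
  rw [this]

lemma gram_psd {p : ℕ} (u : Fin p → X) :
    (Matrix.of fun i j => (⟪u i, u j⟫ : ℝ)).PosSemidef := by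
  refine Matrix.PosSemidef.of_dotProduct_mulVec_nonneg ?_ ?_
  · ext i j
    simp [Matrix.conjTranspose_apply, real_inner_comm]
  · intro x
    have : dotProduct (star x)
          ((Matrix.of fun i j => (⟪u i, u j⟫ : ℝ)).mulVec x)
        = ⟪∑ i, x i • u i, ∑ j, x j • u j⟫ := by
      simp only [dotProduct, Matrix.mulVec, dotProduct, Pi.star_apply,
        star_trivial, Matrix.of_apply, sum_inner, inner_sum, real_inner_smul_left,
        real_inner_smul_right, Finset.mul_sum]
      exact Finset.sum_congr rfl fun i _ => Finset.sum_congr rfl fun j _ => by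
        rw [real_inner_comm (u j) (u i)]; ring
    rw [this]
    exact real_inner_self_nonneg

lemma gram_det_nonneg {p : ℕ} (u : Fin p → X) :
    0 ≤ (Matrix.of fun i j => (⟪u i, u j⟫ : ℝ)).det := by
  have h := gram_psd u
  rw [h.isHermitian.det_eq_prod_eigenvalues]
  simpa using Finset.prod_nonneg fun i (_ : i ∈ Finset.univ) => h.eigenvalues_nonneg i

lemma gram_append_det {p q : ℕ} (u : Fin p → X) (w : Fin q → X)
    (h : ∀ i j, (⟪u i, w j⟫ : ℝ) = 0) :
    (Matrix.of fun i j => (⟪Fin.append u w i, Fin.append u w j⟫ : ℝ)).det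
      = (Matrix.of fun i j => (⟪u i, u j⟫ : ℝ)).det
        * (Matrix.of fun i j => (⟪w i, w j⟫ : ℝ)).det := by
  rw [← Matrix.det_submatrix_equiv_self finSumFinEquiv]
  have heq : (Matrix.of fun i j => (⟪Fin.append u w i, Fin.append u w j⟫ : ℝ)).submatrix
      finSumFinEquiv finSumFinEquiv
      = Matrix.fromBlocks (Matrix.of fun i j => (⟪u i, u j⟫ : ℝ)) 0 0
        (Matrix.of fun i j => (⟪w i, w j⟫ : ℝ)) := by
    ext i j
    rcases i with i | i <;> rcases j with j | j
    · simp [Fin.append_left]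
    · simp [Fin.append_left, Fin.append_right, h]
    · simp only [Matrix.submatrix_apply, finSumFinEquiv_apply_right, finSumFinEquiv_apply_left,
        Matrix.of_apply, Fin.append_right, Fin.append_left, Matrix.fromBlocks_apply₂₁,
        Matrix.zero_apply]
      rw [real_inner_comm]
      exact h j i
    · simp [Fin.append_right]
  rw [heq, Matrix.det_fromBlocks_zero₂₁]

end Aux

/-- Let `A = v₁∧⋯∧v_p` be a nonzero `p`-blade in a finite-dimensional real inner
product space `X` and `W ≤ X` a subspace.  With the exterior algebra carrying the
determinant (Gram) inner product `ip` (and norm `√(ip x x)`), for any blade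
`B = c • (w₁∧⋯∧w_q)` with `[B] = W` we have `‖A ∧ B‖ = ‖P_{W^⊥}(A)‖·‖B‖`,
where `P_{W^⊥}` is the orthogonal projection onto `W^⊥` applied factor-wise. -/
theorem norm_wedge_eq_norm_proj_orthogonal_mul_norm
    {X : Type*} [NormedAddCommGroup X] [InnerProductSpace ℝ X]
    [FiniteDimensional ℝ X]
    (ip : ExteriorAlgebra ℝ X →ₗ[ℝ] ExteriorAlgebra ℝ X →ₗ[ℝ] ℝ)
    (hGram : ∀ {p : ℕ} (u w : Fin p → X),
      ip (blade u) (blade w) = (Matrix.of fun i j => (⟪u i, w j⟫ : ℝ)).det)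
    (W : Submodule ℝ X)
    {p q : ℕ} (v : Fin p → X) (w : Fin q → X) (c : ℝ)
    (hA : blade v ≠ 0) (hc : c ≠ 0) (hBblade : blade w ≠ 0)
    (hW : Submodule.span ℝ (Set.range w) = W) :
    Real.sqrt (ip (blade v * (c • blade w)) (blade v * (c • blade w))) =
      Real.sqrt (ip (blade fun i => (Submodule.orthogonalProjection Wᗮ (v i) : X))
          (blade fun i => (Submodule.orthogonalProjection Wᗮ (v i) : X))) *
        Real.sqrt (ip (c • blade w) (c • blade w)) := by
  set Pv : Fin p → X := fun i => (Submodule.orthogonalProjection Wᗮ (v i) : X) with hPv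
  have hdiff : ∀ i, v i - Pv i ∈ Submodule.span ℝ (Set.range w) := by
    intro i
    rw [hW]
    have := Submodule.sub_starProjection_mem_orthogonal (K := Wᗮ) (v i)
    rwa [Submodule.orthogonal_orthogonal] at this
  have horth : ∀ i j, (⟪Pv i, w j⟫ : ℝ) = 0 := by
    intro i j
    have hw : w j ∈ W := by rw [← hW]; exact Submodule.subset_span ⟨j, rfl⟩
    rw [real_inner_comm]
    exact Submodule.inner_right_of_mem_orthogonal hw (SetLike.coe_mem _)
  have hkey : blade v * blade w = blade Pv * blade w :=
    blade_mul_blade_congr w v Pv hdiff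
  have hbig : (ip (blade v * blade w)) (blade v * blade w)
      = (Matrix.of fun i j => (⟪Pv i, Pv j⟫ : ℝ)).det
        * (Matrix.of fun i j => (⟪w i, w j⟫ : ℝ)).det := by
    rw [hkey, blade_mul_blade, hGram, gram_append_det _ _ horth]
  have h1 : (ip (blade Pv)) (blade Pv) = (Matrix.of fun i j => (⟪Pv i, Pv j⟫ : ℝ)).det :=
    hGram _ _
  have h2 : (ip (blade w)) (blade w) = (Matrix.of fun i j => (⟪w i, w j⟫ : ℝ)).det :=
    hGram _ _
  have hsmul : blade v * (c • blade w) = c • (blade v * blade w) := mul_smul_comm _ _ _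
  rw [hsmul, map_smul, map_smul, map_smul, map_smul]
  simp only [LinearMap.smul_apply, smul_eq_mul]
  rw [hbig, h1, h2]
  rw [show c * (c * ((Matrix.of fun i j => (⟪Pv i, Pv j⟫ : ℝ)).det
      * (Matrix.of fun i j => (⟪w i, w j⟫ : ℝ)).det))
    = (Matrix.of fun i j => (⟪Pv i, Pv j⟫ : ℝ)).det
      * (c * (c * (Matrix.of fun i j => (⟪w i, w j⟫ : ℝ)).det)) by ring]
  exact Real.sqrt_mul' _ (by nlinarith [gram_det_nonneg w, sq_nonneg c])
end

section
/- Let (e₁,…,e_p) and (f₁,…,f_p) be orthonormal families in a real inner product space with ⟨e_i, f_j⟩ = δ_{ij} cos θ_i and suppose some θ_i = 0 (so e_i = f_i when ‖e_i − f_i‖² = 2 − 2cos θ_i = 0). Then e₁∧⋯∧e_p ∧ f₁∧⋯∧f_p = 0; more generally, ‖e₁∧⋯∧e_p ∧ f₁∧⋯∧f_p‖ = ∏_{i=1}^p sin θ_i. -/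
open scoped RealInnerProductSpace

/-- Let `(e₁,…,e_p)` and `(f₁,…,f_p)` be orthonormal families in a real inner
product space with `⟨e_i, f_j⟩ = δ_{ij} cos θ_i`, `θ_i ∈ [0, π/2]`, with exterior
powers carrying the determinant (Gram) inner product `ip` (positive definite).
Then `‖e₁∧⋯∧e_p ∧ f₁∧⋯∧f_p‖ = ∏ᵢ sin θ_i`; in particular, if some `θ_i = 0`
(so that `e_i = f_i`), then `e₁∧⋯∧e_p ∧ f₁∧⋯∧f_p = 0`. -/
theorem norm_wedge_append_eq_prod_sin
    {X : Type*} [NormedAddCommGroup X] [InnerProductSpace ℝ X]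
    (ip : ExteriorAlgebra ℝ X →ₗ[ℝ] ExteriorAlgebra ℝ X →ₗ[ℝ] ℝ)
    (hGram : ∀ {p : ℕ} (u w : Fin p → X),
      ip (blade u) (blade w) = (Matrix.of fun i j => (⟪u i, w j⟫ : ℝ)).det)
    (hdef : ∀ x : ExteriorAlgebra ℝ X, ip x x = 0 → x = 0)
    {p : ℕ} (e f : Fin p → X) (θ : Fin p → ℝ)
    (he : Orthonormal ℝ e) (hf : Orthonormal ℝ f)
    (hθ : ∀ i, θ i ∈ Set.Icc 0 (Real.pi / 2))
    (hef : ∀ i j, ⟪e i, f j⟫ = if i = j then Real.cos (θ i) else 0) :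
    Real.sqrt (ip (blade (Fin.append e f)) (blade (Fin.append e f))) =
        ∏ i, Real.sin (θ i) ∧
      ((∃ i, θ i = 0) → blade (Fin.append e f) = 0) := by
  set D : Matrix (Fin p) (Fin p) ℝ := Matrix.diagonal fun i => Real.cos (θ i) with hD
  have key : ip (blade (Fin.append e f)) (blade (Fin.append e f)) =
      ∏ i, (Real.sin (θ i)) ^ 2 := by
    rw [hGram]
    have hsub : (Matrix.of fun i j =>
        (⟪Fin.append e f i, Fin.append e f j⟫ : ℝ)).submatrix
          finSumFinEquiv finSumFinEquiv = Matrix.fromBlocks 1 D D 1 := by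
      ext i j
      cases i with
      | inl i =>
        cases j with
        | inl j =>
          simp only [Matrix.submatrix_apply, finSumFinEquiv_apply_left, Matrix.of_apply,
            Fin.append_left, Matrix.fromBlocks_apply₁₁, Matrix.one_apply]
          rw [orthonormal_iff_ite.mp he]
        | inr j =>
          simp only [Matrix.submatrix_apply, finSumFinEquiv_apply_left,
            finSumFinEquiv_apply_right, Matrix.of_apply, Fin.append_left, Fin.append_right,
            Matrix.fromBlocks_apply₁₂, hD, Matrix.diagonal_apply]
          rw [hef i j]
      | inr i =>
        cases j with
        | inl j =>
          simp only [Matrix.submatrix_apply, finSumFinEquiv_apply_left,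
            finSumFinEquiv_apply_right, Matrix.of_apply, Fin.append_left, Fin.append_right,
            Matrix.fromBlocks_apply₂₁, hD, Matrix.diagonal_apply]
          rw [real_inner_comm, hef j i]
          by_cases h : i = j <;> simp [h, eq_comm]
        | inr j =>
          simp only [Matrix.submatrix_apply, finSumFinEquiv_apply_right, Matrix.of_apply,
            Fin.append_right, Matrix.fromBlocks_apply₂₂, Matrix.one_apply]
          rw [orthonormal_iff_ite.mp hf]
    have := Matrix.det_submatrix_equiv_self finSumFinEquiv
      (Matrix.of fun i j => (⟪Fin.append e f i, Fin.append e f j⟫ : ℝ))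
    rw [← this, hsub, Matrix.det_fromBlocks_one₁₁]
    have : (1 : Matrix (Fin p) (Fin p) ℝ) - D * D =
        Matrix.diagonal fun i => (Real.sin (θ i)) ^ 2 := by
      rw [hD, Matrix.diagonal_mul_diagonal, ← Matrix.diagonal_one, Matrix.diagonal_sub]
      have hfn : (fun i => (1 : ℝ) - Real.cos (θ i) * Real.cos (θ i)) =
          fun i => Real.sin (θ i) ^ 2 := by
        funext i; rw [Real.sin_sq]; ring
      rw [hfn]
    rw [this, Matrix.det_diagonal]
  constructor
  · rw [key]
    have hnn : ∀ i ∈ Finset.univ, 0 ≤ Real.sin (θ i) := fun i _ =>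
      Real.sin_nonneg_of_nonneg_of_le_pi (hθ i).1
        (le_trans (hθ i).2 (by linarith [Real.pi_pos]))
    rw [show (∏ i, (Real.sin (θ i)) ^ 2) = (∏ i, Real.sin (θ i)) ^ 2 by
      rw [Finset.prod_pow]]
    exact Real.sqrt_sq (Finset.prod_nonneg hnn)
  · rintro ⟨i, hi⟩
    apply hdef
    rw [key]
    exact Finset.prod_eq_zero (Finset.mem_univ i) (by simp [hi])
end
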